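/- Let K be a simplicial complex on {1,...,m} (an m-cycle graph with m ≥ 5, vertices numbered cyclically, faces being ∅, vertices, and consecutive edges {i, i+1 mod m}). Then in the dg-algebra (Λ[u_1,...,u_{m−1}] ⊗ ℤ[K], d) with du_i = v_i (here I = {m}), the element u_1 v_3 is a cocycle representing a nonzero class in degree 3, and v_m · [u_1 v_3] = 0; hence the cohomology is not a free ℤ[v_m]-module. -/

import Mathlib

set_option maxHeartbeats 1000000
set_option synthInstance.maxHeartbeats 400000

open MvPolynomial

/-- The Stanley–Reisner ideal of `K` over `ℤ`. -/
noncomputable def SRIdeal {m : ℕ} (K : Set (Finset (Fin m))) :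
    Ideal (MvPolynomial (Fin m) ℤ) :=
  Ideal.span {x | ∃ J : Finset (Fin m), J ∉ K ∧ x = ∏ i ∈ J, X i}

/-- The face (Stanley–Reisner) ring `ℤ[K]`. -/
noncomputable abbrev FaceRing {m : ℕ} (K : Set (Finset (Fin m))) :=
  MvPolynomial (Fin m) ℤ ⧸ SRIdeal K

/-- The class of `vᵢ` in the face ring. -/
noncomputable def vcl {m : ℕ} (K : Set (Finset (Fin m))) (i : Fin m) : FaceRing K :=
  Ideal.Quotient.mk _ (X i)

/-- The dg-algebra `Λ[uᵢ : i ∉ I] ⊗ ℤ[K]`, realised as the exterior algebra over the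
face ring on the free module with basis `{uᵢ : i ∉ I}`. -/
noncomputable abbrev KAlg {m : ℕ} (K : Set (Finset (Fin m))) (I : Finset (Fin m)) :=
  ExteriorAlgebra (FaceRing K) ({i : Fin m // i ∉ I} →₀ FaceRing K)

/-- The exterior generator `uᵢ`, `i ∉ I`. -/
noncomputable def uGen {m : ℕ} (K : Set (Finset (Fin m))) (I : Finset (Fin m))
    (i : {i : Fin m // i ∉ I}) : KAlg K I :=
  ExteriorAlgebra.ι (FaceRing K) (Finsupp.single i 1)

/-- The differential on `Λ[uᵢ : i ∉ I] ⊗ ℤ[K]`: the (anti)derivation with `d uᵢ = vᵢ`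
and `d vⱼ = 0`, realised as contraction with the dual element `uᵢ ↦ vᵢ`. -/
noncomputable def kd {m : ℕ} (K : Set (Finset (Fin m))) (I : Finset (Fin m)) :
    KAlg K I →ₗ[FaceRing K] KAlg K I :=
  CliffordAlgebra.contractLeft
    (Finsupp.linearCombination (FaceRing K) (fun i : {i : Fin m // i ∉ I} => vcl K i.1))

/-- The polynomial ring `ℤ[vᵢ : i ∈ I] = H^*(BT_I)`. -/
abbrev SRing {m : ℕ} (I : Finset (Fin m)) := MvPolynomial {i : Fin m // i ∈ I} ℤ

noncomputable instance {m : ℕ} (K : Set (Finset (Fin m))) (I : Finset (Fin m)) :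
    Algebra (SRing I) (FaceRing K) :=
  ((aeval fun i : {i : Fin m // i ∈ I} => vcl K i.1).toRingHom :
    SRing I →+* FaceRing K).toAlgebra

/-- The differential, as a map of modules over `ℤ[vᵢ : i ∈ I]`. -/
noncomputable def kdS {m : ℕ} (K : Set (Finset (Fin m))) (I : Finset (Fin m)) :
    KAlg K I →ₗ[SRing I] KAlg K I :=
  { toFun := kd K I
    map_add' := (kd K I).map_add
    map_smul' := by
      intro c x
      show kd K I ((algebraMap (SRing I) (FaceRing K)) c • x) = c • kd K I x
      rw [map_smul, algebra_compatible_smul (FaceRing K) c (kd K I x)] }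

/-- The cohomology `H(Λ[uᵢ : i ∉ I] ⊗ ℤ[K], d)` as a module over `ℤ[vᵢ : i ∈ I]`. -/
noncomputable abbrev KCohomology {m : ℕ} (K : Set (Finset (Fin m))) (I : Finset (Fin m)) :=
  LinearMap.ker (kdS K I) ⧸
    (LinearMap.range (kdS K I)).comap (LinearMap.ker (kdS K I)).subtype

/-- The one-dimensional simplicial complex associated with a simple graph: faces are
`∅`, the singletons, and the edges. -/
def graphComplex {V : Type*} [DecidableEq V] (G : SimpleGraph V) : Set (Finset V) :=
  {σ | σ.card ≤ 1 ∨ ∃ i j, G.Adj i j ∧ σ = {i, j}}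

/-! ### Auxiliary lemmas -/

lemma cg_nonadj16 {m : ℕ} {i j : Fin m}
    (h1 : ((m - j.val) + i.val) % m ≠ 1) (h2 : ((m - i.val) + j.val) % m ≠ 1) :
    ¬ (SimpleGraph.cycleGraph m).Adj i j := by
  rw [SimpleGraph.cycleGraph_adj']
  push_neg
  constructor
  · rw [Fin.sub_def]; exact h1
  · rw [Fin.sub_def]; exact h2

lemma pair_not_in16 {m : ℕ} {i j : Fin m} (hne : i ≠ j)
    (hadj : ¬ (SimpleGraph.cycleGraph m).Adj i j) :
    ({i, j} : Finset (Fin m)) ∉ graphComplex (SimpleGraph.cycleGraph m) := by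
  rintro (hcard | ⟨a, b, hab, hset⟩)
  · rw [Finset.card_insert_of_notMem (by simp [hne]), Finset.card_singleton] at hcard; omega
  · have hi : i ∈ ({a, b} : Finset (Fin m)) := hset ▸ Finset.mem_insert_self i {j}
    have hj : j ∈ ({a, b} : Finset (Fin m)) :=
      hset ▸ Finset.mem_insert_of_mem (Finset.mem_singleton_self j)
    simp only [Finset.mem_insert, Finset.mem_singleton] at hi hj
    rcases hi with rfl | rfl <;> rcases hj with rfl | rfl
    · exact hne rfl
    · exact hadj hab
    · exact hadj hab.symm
    · exact hne rfl

lemma vcl_mul_eq_zero16 {m : ℕ} (K : Set (Finset (Fin m)))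
    {i j : Fin m} (hne : i ≠ j) (hnK : ({i, j} : Finset (Fin m)) ∉ K) :
    vcl K i * vcl K j = 0 := by
  show Ideal.Quotient.mk _ (X i) * Ideal.Quotient.mk _ (X j) = 0
  rw [← map_mul, Ideal.Quotient.eq_zero_iff_mem]
  exact Ideal.subset_span ⟨{i, j}, hnK, (Finset.prod_pair hne).symm⟩

section CoreLemmas
open ExteriorAlgebra

variable {R : Type*} [CommRing R] {M : Type*} [AddCommGroup M] [Module R M]
  {N : Type*} [AddCommGroup N] [Module R N]

lemma liftAlt_apply_ι (Φ : ∀ i : ℕ, M [⋀^Fin i]→ₗ[R] N) (ψ : M →ₗ[R] N)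
    (hΦ1 : Φ 1 = AlternatingMap.ofSubsingleton R M N 0 ψ) (a : M) :
    liftAlternating Φ (ι R a) = ψ a := by
  rw [liftAlternating_ι, hΦ1]
  simp [AlternatingMap.ofSubsingleton]

lemma liftAlt_apply_alg (Φ : ∀ i : ℕ, M [⋀^Fin i]→ₗ[R] N)
    (hΦ0 : Φ 0 = 0) (r : R) :
    liftAlternating Φ (algebraMap R (ExteriorAlgebra R M) r) = 0 := by
  rw [liftAlternating_algebraMap, hΦ0]
  simp

lemma liftAlt_apply_ι_mul_ι_mul (Φ : ∀ i : ℕ, M [⋀^Fin i]→ₗ[R] N)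
    (hΦ2 : ∀ i, Φ (i + 2) = 0) (a b : M) (z : ExteriorAlgebra R M) :
    liftAlternating Φ (ι R a * (ι R b * z)) = 0 := by
  rw [liftAlternating_ι_mul, liftAlternating_ι_mul]
  have hF : (fun i => ((Φ i.succ.succ).curryLeft a).curryLeft b)
      = (0 : ∀ i : ℕ, M [⋀^Fin i]→ₗ[R] N) := by
    funext i
    rw [show Φ i.succ.succ = 0 from hΦ2 i]
    simp
  rw [hF, map_zero]
  rfl

lemma liftAlt_apply_ι_mul_alg (Φ : ∀ i : ℕ, M [⋀^Fin i]→ₗ[R] N) (ψ : M →ₗ[R] N)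
    (hΦ1 : Φ 1 = AlternatingMap.ofSubsingleton R M N 0 ψ) (a : M) (r : R) :
    liftAlternating Φ (ι R a * algebraMap R (ExteriorAlgebra R M) r) = r • ψ a := by
  rw [← Algebra.commutes, ← Algebra.smul_def, map_smul, liftAlt_apply_ι Φ ψ hΦ1]

lemma liftAlt_contract_zero (f : Module.Dual R M) (ψ : M →ₗ[R] N)
    (hsym : ∀ a b : M, f a • ψ b = f b • ψ a)
    (Φ : ∀ i : ℕ, M [⋀^Fin i]→ₗ[R] N)
    (hΦ0 : Φ 0 = 0) (hΦ1 : Φ 1 = AlternatingMap.ofSubsingleton R M N 0 ψ)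
    (hΦ2 : ∀ i, Φ (i + 2) = 0)
    (x : ExteriorAlgebra R M) :
    liftAlternating Φ (CliffordAlgebra.contractLeft (Q := (0 : QuadraticForm R M)) f x) = 0 := by
  set L : ExteriorAlgebra R M →ₗ[R] N := liftAlternating Φ with hL
  set d : ExteriorAlgebra R M →ₗ[R] ExteriorAlgebra R M :=
    CliffordAlgebra.contractLeft (Q := (0 : QuadraticForm R M)) f with hd
  have hdιmul : ∀ (a : M) (x : ExteriorAlgebra R M),
      d (ι R a * x) = f a • x - ι R a * d x := by
    intro a x; apply CliffordAlgebra.contractLeft_ι_mul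
  have hdι : ∀ a : M, d (ι R a) = algebraMap R (ExteriorAlgebra R M) (f a) := by
    intro a; apply CliffordAlgebra.contractLeft_ι
  have hd1 : d (1 : ExteriorAlgebra R M) = 0 := by apply CliffordAlgebra.contractLeft_one
  have hbig : ∀ (a b e : M) (z : ExteriorAlgebra R M),
      L (d (ι R a * (ι R b * (ι R e * z)))) = 0 := by
    intro a b e z
    rw [hdιmul, hdιmul, hdιmul]
    simp only [mul_sub, smul_sub, mul_smul_comm, map_sub, map_smul, hL,
      liftAlt_apply_ι_mul_ι_mul Φ hΦ2, smul_zero, sub_zero, sub_self]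
  have hx : x ∈ (⊤ : Submodule R (ExteriorAlgebra R M)) := trivial
  rw [← ExteriorAlgebra.ιMulti_span] at hx
  induction hx using Submodule.span_induction with
  | mem x hx =>
      obtain ⟨⟨n, w⟩, rfl⟩ := hx
      beta_reduce
      match n with
      | 0 =>
          rw [ExteriorAlgebra.ιMulti_zero_apply, hd1, map_zero]
      | 1 =>
          rw [ExteriorAlgebra.ιMulti_succ_apply, ExteriorAlgebra.ιMulti_zero_apply,
            mul_one, hdι, hL, liftAlt_apply_alg Φ hΦ0]
      | 2 =>
          rw [ExteriorAlgebra.ιMulti_succ_apply, ExteriorAlgebra.ιMulti_succ_apply,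
            ExteriorAlgebra.ιMulti_zero_apply, mul_one, hdιmul, hdι,
            ← Algebra.commutes, ← Algebra.smul_def, map_sub, map_smul, map_smul, hL,
            liftAlt_apply_ι Φ ψ hΦ1, liftAlt_apply_ι Φ ψ hΦ1, hsym]
          exact sub_self _
      | (n + 3) =>
          rw [ExteriorAlgebra.ιMulti_succ_apply, ExteriorAlgebra.ιMulti_succ_apply,
            ExteriorAlgebra.ιMulti_succ_apply]
          exact hbig _ _ _ _
  | zero => rw [map_zero, map_zero]
  | add x y _ _ hx hy => rw [map_add, map_add, hx, hy, add_zero]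
  | smul r x _ hx => rw [map_smul, map_smul, hx, smul_zero]

end CoreLemmas

set_option maxHeartbeats 4000000 in
theorem stmt16aux {m : ℕ} (hm : 4 < m)
    (K : Set (Finset (Fin m))) (hKdef : K = graphComplex (SimpleGraph.cycleGraph m))
    (I : Finset (Fin m)) (h0 : (⟨0, by omega⟩ : Fin m) ∉ I)
    (hm1 : (⟨m - 1, by omega⟩ : Fin m) ∈ I)
    (c : KAlg K I)
    (hceq : c = ExteriorAlgebra.ι (FaceRing K)
        (Finsupp.single (⟨⟨0, by omega⟩, h0⟩ : {i : Fin m // i ∉ I}) 1) *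
      algebraMap (FaceRing K) (KAlg K I) (vcl K ⟨2, by omega⟩)) :
    kd K I c = 0 ∧
    c ∉ LinearMap.range (kd K I) ∧
    algebraMap (FaceRing K) (KAlg K I) (vcl K ⟨m - 1, by omega⟩) * c ∈
      LinearMap.range (kd K I) ∧
    ¬ Module.Free (SRing I) (KCohomology K I) := by
  -- non-faces
  have hnadj02 : ¬ (SimpleGraph.cycleGraph m).Adj ⟨0, by omega⟩ ⟨2, by omega⟩ := by
    apply cg_nonadj16
    · show ((m - 2) + 0) % m ≠ 1
      rw [Nat.mod_eq_of_lt (by omega)]; omega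
    · show ((m - 0) + 2) % m ≠ 1
      have h : m - 0 + 2 = 2 + m := by omega
      rw [h, Nat.add_mod_right, Nat.mod_eq_of_lt (by omega)]; omega
  have hnadj2m : ¬ (SimpleGraph.cycleGraph m).Adj ⟨2, by omega⟩ ⟨m - 1, by omega⟩ := by
    apply cg_nonadj16
    · show ((m - (m - 1)) + 2) % m ≠ 1
      have h : m - (m - 1) + 2 = 3 := by omega
      rw [h, Nat.mod_eq_of_lt (by omega)]; omega
    · show ((m - 2) + (m - 1)) % m ≠ 1
      have h : (m - 2) + (m - 1) = (m - 3) + m := by omega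
      rw [h, Nat.add_mod_right, Nat.mod_eq_of_lt (by omega)]; omega
  have hv02 : vcl K ⟨0, by omega⟩ * vcl K ⟨2, by omega⟩ = 0 := by
    apply vcl_mul_eq_zero16 K (by simp [Fin.ext_iff])
    rw [hKdef]; exact pair_not_in16 (by simp [Fin.ext_iff]) hnadj02
  have hv2m : vcl K ⟨2, by omega⟩ * vcl K ⟨m - 1, by omega⟩ = 0 := by
    apply vcl_mul_eq_zero16 K (by simp [Fin.ext_iff]; omega)
    rw [hKdef]; exact pair_not_in16 (by simp [Fin.ext_iff]; omega) hnadj2m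
  -- notation
  set i0 : {i : Fin m // i ∉ I} := ⟨⟨0, by omega⟩, h0⟩ with hi0
  have hc : c = ExteriorAlgebra.ι (FaceRing K) (Finsupp.single i0 1) *
      algebraMap (FaceRing K) (KAlg K I) (vcl K ⟨2, by omega⟩) := hceq
  set fd := Finsupp.linearCombination (FaceRing K)
    (fun i : {i : Fin m // i ∉ I} => vcl K i.1) with hfd
  -- bridging lemmas for kd
  have hkdιmul : ∀ (a : {i : Fin m // i ∉ I} →₀ FaceRing K) (x : KAlg K I),
      kd K I (ExteriorAlgebra.ι (FaceRing K) a * x)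
        = fd a • x - ExteriorAlgebra.ι (FaceRing K) a * kd K I x := by
    intro a x; apply CliffordAlgebra.contractLeft_ι_mul
  have hkdι : ∀ (a : {i : Fin m // i ∉ I} →₀ FaceRing K),
      kd K I (ExteriorAlgebra.ι (FaceRing K) a) = algebraMap (FaceRing K) (KAlg K I) (fd a) := by
    intro a; apply CliffordAlgebra.contractLeft_ι
  have hkdalg : ∀ r : FaceRing K, kd K I (algebraMap (FaceRing K) (KAlg K I) r) = 0 := by
    intro r; apply CliffordAlgebra.contractLeft_algebraMap
  have hkdmulalg : ∀ (x : KAlg K I) (r : FaceRing K),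
      kd K I (x * algebraMap (FaceRing K) (KAlg K I) r)
        = kd K I x * algebraMap (FaceRing K) (KAlg K I) r := by
    intro x r; apply CliffordAlgebra.contractLeft_mul_algebraMap
  have hkd1 : kd K I (1 : KAlg K I) = 0 := by apply CliffordAlgebra.contractLeft_one
  have hfde0 : fd (Finsupp.single i0 1) = vcl K ⟨0, by omega⟩ := by
    rw [hfd, Finsupp.linearCombination_single, one_smul]
  -- Part 1 : cocycle
  have hF1 : kd K I c = 0 := by
    rw [hc, hkdmulalg, hkdι, hfde0, ← map_mul, hv02, map_zero]
  -- Part 3 element is zero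
  have hF3 : algebraMap (FaceRing K) (KAlg K I) (vcl K ⟨m - 1, by omega⟩) * c = 0 := by
    rw [hc, Algebra.commutes, mul_assoc, ← map_mul, hv2m, map_zero, mul_zero]
  -- Part 2 : not a boundary
  have hF2 : c ∉ LinearMap.range (kd K I) := by
    -- the detecting functional via dual numbers
    have hker : ∀ a ∈ SRIdeal K,
        (aeval (fun j : Fin m => if j.val = 0 ∨ j.val = 2 then (DualNumber.eps : DualNumber ℤ)
          else 0)).toRingHom a = 0 := by
      intro a ha
      refine RingHom.mem_ker.mp (Ideal.span_le.mpr ?_ ha)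
      rintro x ⟨J, hJ, rfl⟩
      simp only [SetLike.mem_coe, RingHom.mem_ker, AlgHom.toRingHom_eq_coe, RingHom.coe_coe,
        map_prod, aeval_X]
      by_cases hsub : ∀ i ∈ J, (i.val = 0 ∨ i.val = 2)
      · have hcard : ¬ J.card ≤ 1 := by
          intro hcle; exact hJ (hKdef ▸ Or.inl hcle)
        have hJsub : J ⊆ {(⟨0, by omega⟩ : Fin m), ⟨2, by omega⟩} := by
          intro i hi
          rcases hsub i hi with h | h <;>
            simp only [Finset.mem_insert, Finset.mem_singleton] <;>
            [left; right] <;> exact Fin.ext h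
        have hJeq : J = {(⟨0, by omega⟩ : Fin m), ⟨2, by omega⟩} := by
          apply Finset.eq_of_subset_of_card_le hJsub
          rw [Finset.card_insert_of_notMem (by simp [Fin.ext_iff]), Finset.card_singleton]
          omega
        rw [hJeq, Finset.prod_pair (by simp [Fin.ext_iff])]
        simp only [if_pos (Or.inl rfl), if_pos (Or.inr rfl)]
        exact DualNumber.eps_mul_eps
      · push_neg at hsub
        obtain ⟨i, hi, h0, h2⟩ := hsub
        exact Finset.prod_eq_zero hi (by simp [h0, h2])
    set θ : FaceRing K →+* DualNumber ℤ :=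
      Ideal.Quotient.lift (SRIdeal K)
        (aeval (fun j : Fin m => if j.val = 0 ∨ j.val = 2 then (DualNumber.eps : DualNumber ℤ)
          else 0)).toRingHom hker with hθ
    have hθv : ∀ i : Fin m,
        θ (vcl K i) = (if i.val = 0 ∨ i.val = 2 then (DualNumber.eps : DualNumber ℤ) else 0) := by
      intro i
      show θ (Ideal.Quotient.mk _ (X i)) = _
      rw [hθ, Ideal.Quotient.lift_mk]
      simp [aeval_X]
    letI : Module (FaceRing K) (DualNumber ℤ) := Module.compHom _ θ
    have hsm : ∀ (r : FaceRing K) (x : DualNumber ℤ), r • x = θ r * x := fun _ _ => rfl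
    set ψ : ({i : Fin m // i ∉ I} →₀ FaceRing K) →ₗ[FaceRing K] DualNumber ℤ :=
      Finsupp.linearCombination (FaceRing K)
        (fun i : {i : Fin m // i ∉ I} =>
          if i.1.val = 0 ∨ i.1.val = 2 then (1 : DualNumber ℤ) else 0) with hψ
    have hKey : ∀ a, θ (fd a) = DualNumber.eps * ψ a := by
      intro a
      induction a using Finsupp.induction_linear with
      | zero => simp
      | add f g hf hg => simp only [map_add, mul_add, hf, hg]
      | single j r =>
          rw [show fd (Finsupp.single j r) = r • vcl K j.1 from
              Finsupp.linearCombination_single _ _ _,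
            show ψ (Finsupp.single j r) = r •
              (if j.1.val = 0 ∨ j.1.val = 2 then (1 : DualNumber ℤ) else 0) from
              Finsupp.linearCombination_single _ _ _]
          rw [smul_eq_mul, map_mul, hθv, hsm]
          by_cases h : (j.1.val = 0 ∨ j.1.val = 2) <;> simp [h] <;> ring
    have hsym : ∀ a b : ({i : Fin m // i ∉ I} →₀ FaceRing K),
        fd a • ψ b = fd b • ψ a := by
      intro a b
      rw [hsm, hsm, hKey, hKey]
      ring
    set Φ : ∀ i : ℕ, ({i : Fin m // i ∉ I} →₀ FaceRing K) [⋀^Fin i]→ₗ[FaceRing K] DualNumber ℤ :=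
      fun i => match i with
      | 1 => AlternatingMap.ofSubsingleton (FaceRing K) _ (DualNumber ℤ) 0 ψ
      | _ => 0
      with hΦ
    rintro ⟨y, hy⟩
    have hz : ExteriorAlgebra.liftAlternating Φ (kd K I y) = 0 :=
      liftAlt_contract_zero fd ψ hsym Φ rfl rfl (fun i => rfl) y
    rw [hy, hc, liftAlt_apply_ι_mul_alg Φ ψ rfl] at hz
    have hψ1 : ψ (Finsupp.single i0 1) = 1 := by
      rw [hψ, Finsupp.linearCombination_single, one_smul]
      exact if_pos (Or.inl rfl)
    rw [hψ1, hsm, mul_one, hθv, if_pos (Or.inr rfl)] at hz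
    have : (DualNumber.eps : DualNumber ℤ).snd = (0 : DualNumber ℤ).snd := by rw [hz]
    rw [TrivSqZeroExt.snd_zero, DualNumber.snd_eps] at this
    exact one_ne_zero this
  -- assemble
  refine ⟨hF1, hF2, ⟨0, by rw [map_zero, hF3]⟩, ?_⟩
  -- Part 4 : not free
  intro hFree
  haveI := hFree
  set v : SRing I := X ⟨⟨m - 1, by omega⟩, hm1⟩ with hv
  have hcker : c ∈ LinearMap.ker (kdS K I) := LinearMap.mem_ker.mpr hF1
  set ξ : KCohomology K I := Submodule.Quotient.mk ⟨c, hcker⟩ with hξ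
  have hξ0 : ξ ≠ 0 := by
    intro h0
    rw [hξ, Submodule.Quotient.mk_eq_zero, Submodule.mem_comap] at h0
    obtain ⟨y, hy⟩ := h0
    exact hF2 ⟨y, hy⟩
  have hav : algebraMap (SRing I) (FaceRing K) v = vcl K ⟨m - 1, by omega⟩ := by
    show (aeval fun i : {i : Fin m // i ∈ I} => vcl K i.1 : SRing I →ₐ[ℤ] FaceRing K)
      (X ⟨⟨m - 1, by omega⟩, hm1⟩) = _
    rw [aeval_X]
  have hvc : v • c = 0 := by
    rw [algebra_compatible_smul (FaceRing K) v c, hav, Algebra.smul_def, hF3]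
  have hvξ : v • ξ = 0 := by
    rw [hξ, ← Submodule.Quotient.mk_smul, Submodule.Quotient.mk_eq_zero, Submodule.mem_comap]
    refine ⟨0, ?_⟩
    rw [map_zero]
    exact (show ((v • (⟨c, hcker⟩ : LinearMap.ker (kdS K I))) : KAlg K I) = v • c from rfl).trans
      hvc |>.symm
  rcases smul_eq_zero.mp hvξ with h | h
  · exact MvPolynomial.X_ne_zero _ h
  · exact hξ0 h

set_option maxHeartbeats 4000000 in
/-- Let `K` be the boundary of an `m`-gon, `m ≥ 5` (the cycle graph on `m` vertices,
numbered cyclically), and `I = {m}` (so `T_I` is the `m`-th coordinate circle).  Then in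
`(Λ[u₁,…,u_{m-1}] ⊗ ℤ[K], d)` the element `u₁v₃` is a cocycle, its class is nonzero,
and `v_m · [u₁v₃] = 0`; hence the cohomology is not a free `ℤ[v_m]`-module. -/
theorem stmt16 {m : ℕ} (hm : 5 ≤ m)
    (K : Set (Finset (Fin m))) (hKdef : K = graphComplex (SimpleGraph.cycleGraph m)) :
    letI I : Finset (Fin m) := {⟨m - 1, by omega⟩}
    letI c : KAlg K I := uGen K I
        ⟨⟨0, by omega⟩, Finset.notMem_singleton.mpr
          (fun h => by have := congrArg Fin.val h; simp at this; omega)⟩ *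
      algebraMap (FaceRing K) (KAlg K I) (vcl K ⟨2, by omega⟩)
    kd K I c = 0 ∧
    c ∉ LinearMap.range (kd K I) ∧
    algebraMap (FaceRing K) (KAlg K I) (vcl K ⟨m - 1, by omega⟩) * c ∈
      LinearMap.range (kd K I) ∧
    ¬ Module.Free (SRing I) (KCohomology K I) := by
  exact stmt16aux hm K hKdef {⟨m - 1, _⟩}
    (Finset.notMem_singleton.mpr
      (fun h => by have := congrArg Fin.val h; simp at this; omega))
    (Finset.mem_singleton_self _)
    (uGen K {⟨m - 1, _⟩} ⟨⟨0, by omega⟩, Finset.notMem_singleton.mpr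
          (fun h => by have := congrArg Fin.val h; simp at this; omega)⟩ *
      algebraMap (FaceRing K) _ (vcl K ⟨2, by omega⟩))
    (by rw [uGen])
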